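/- arXiv:1006.3023 — 4 statements merged into one kernel-verified Lean document; each statement's English description precedes it below -/
import Mathlib

section
/- A space X has the Hurewicz property if and only if every continuous image of X in the Baire space ω^ω is bounded with respect to eventual domination. -/
/-!
A continuous `f : X → ℕ^ℕ` yields the increasing open covers `{x | f x n ≤ k}`, `k ∈ ℕ`; finitely
many members of an increasing cover lie in a single one, so a Hurewicz selection from these
covers is a bound `g` for the image of `f`. Conversely, a clopen basis and the Lindelöf
property refine each open cover `U n` to a sequence of clopen sets `W n k`; the index of the
first `W n k` containing `x` is then a continuous function of `x`, and a bound `g` for it selects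
the finitely many members of `U n` containing `W n 0, …, W n (g n)`.
-/

open Filter

/-- The Hurewicz covering property. -/
def HurewiczProperty (X : Type*) [TopologicalSpace X] : Prop :=
  ∀ U : ℕ → Set (Set X),
    (∀ n, (∀ u ∈ U n, IsOpen u) ∧ ⋃₀ U n = Set.univ) →
    ∃ F : ℕ → Set (Set X),
      (∀ n, F n ⊆ U n ∧ (F n).Finite) ∧
      ∀ x : X, ∀ᶠ n in atTop, x ∈ ⋃₀ F n

open Set

lemma exists_sUnion_subset_of_subset_range {α : Type*} {φ : ℕ → Set α} (hφ : Monotone φ)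
    {F : Set (Set α)} (hF : F.Finite) (hFφ : F ⊆ range φ) : ∃ k, ⋃₀ F ⊆ φ k := by
  obtain ⟨t, -, ht, rfl⟩ : ∃ t ⊆ univ, t.Finite ∧ F = φ '' t :=
    exists_subset_image_finite_and.1 ⟨F, by rwa [image_univ], hF, rfl⟩
  obtain ⟨k, hk⟩ := ht.bddAbove
  exact ⟨k, sUnion_subset (forall_mem_image.2 fun i hi => hφ (hk hi))⟩

lemma exists_continuous_mem_of_isClopen_cover {X : Type*} [TopologicalSpace X]
    {W : ℕ → Set X} (hW : ∀ k, IsClopen (W k)) (hcov : ∀ x, ∃ k, x ∈ W k) :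
    ∃ f : X → ℕ, Continuous f ∧ ∀ x, x ∈ W (f x) := by
  classical
  refine ⟨fun x => Nat.find (hcov x), continuous_discrete_rng.2 fun k => ?_,
    fun x => Nat.find_spec (hcov x)⟩
  have hfiber : (fun x => Nat.find (hcov x)) ⁻¹' {k} = W k ∩ ⋂ j ∈ Finset.range k, (W j)ᶜ := by
    ext x
    simp only [mem_preimage, mem_singleton_iff, Nat.find_eq_iff, mem_inter_iff, mem_iInter,
      Finset.mem_range, mem_compl_iff]
  rw [hfiber]
  exact (hW k).isOpen.inter (isOpen_biInter_finset fun j _ => (hW j).compl.isOpen)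

lemma exists_isClopen_seq_refinement {X : Type*} [TopologicalSpace X]
    [SecondCountableTopology X] [Nonempty X]
    (hX : TopologicalSpace.IsTopologicalBasis {s : Set X | IsClopen s})
    {U : Set (Set X)} (hUo : ∀ u ∈ U, IsOpen u) (hU : ⋃₀ U = univ) :
    ∃ W : ℕ → Set X, (∀ k, IsClopen (W k)) ∧ (∀ k, ∃ u ∈ U, W k ⊆ u) ∧ ∀ x, ∃ k, x ∈ W k := by
  set S : Set (Set X) := {s | IsClopen s ∧ ∃ u ∈ U, s ⊆ u}
  have hS : ⋃₀ S = univ := by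
    refine eq_univ_of_forall fun x => ?_
    obtain ⟨u, hu, hxu⟩ := mem_sUnion.1 (hU ▸ mem_univ x)
    obtain ⟨s, hs, hxs, hsu⟩ := hX.exists_subset_of_mem_open hxu (hUo u hu)
    exact ⟨s, ⟨hs, u, hu, hsu⟩, hxs⟩
  obtain ⟨T, hTc, hTS, hT⟩ :=
    TopologicalSpace.isOpen_sUnion_countable S fun s hs => hs.1.isOpen
  rw [hS] at hT
  obtain ⟨t, htT, -⟩ := nonempty_sUnion.1 (hT ▸ univ_nonempty)
  obtain ⟨W, rfl⟩ := hTc.exists_eq_range ⟨t, htT⟩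
  rw [sUnion_range] at hT
  exact ⟨W, fun k => (hTS (mem_range_self k)).1, fun k => (hTS (mem_range_self k)).2,
    fun x => mem_iUnion.1 (hT ▸ mem_univ x)⟩

namespace HurewiczProperty

variable {X : Type*} [TopologicalSpace X]

lemma exists_eventually_mem_of_monotone (hH : HurewiczProperty X) {φ : ℕ → ℕ → Set X}
    (hopen : ∀ n k, IsOpen (φ n k)) (hmono : ∀ n, Monotone (φ n)) (hcov : ∀ n x, ∃ k, x ∈ φ n k) :
    ∃ g : ℕ → ℕ, ∀ x, ∀ᶠ n in atTop, x ∈ φ n (g n) := by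
  obtain ⟨F, hF, hmem⟩ := hH (fun n => range (φ n)) fun n =>
    ⟨forall_mem_range.2 (hopen n),
      by rw [sUnion_range]; exact eq_univ_of_forall fun x => mem_iUnion.2 (hcov n x)⟩
  choose g hg using fun n => exists_sUnion_subset_of_subset_range (hmono n) (hF n).2 (hF n).1
  exact ⟨g, fun x => (hmem x).mono fun n hn => hg n hn⟩

lemma exists_eventually_le (hH : HurewiczProperty X) {f : X → ℕ → ℕ} (hf : Continuous f) :
    ∃ g : ℕ → ℕ, ∀ x, ∀ᶠ n in atTop, f x n ≤ g n :=
  hH.exists_eventually_mem_of_monotone (φ := fun n k => {x | f x n ≤ k})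
    (fun n k => (isOpen_discrete (Iic k)).preimage ((continuous_apply n).comp hf))
    (fun _ _ _ hkl _ hx => le_trans hx hkl) fun n x => ⟨f x n, mem_ofPred.2 le_rfl⟩

lemma of_forall_exists_eventually_le [SecondCountableTopology X]
    (hX : TopologicalSpace.IsTopologicalBasis {s : Set X | IsClopen s})
    (hB : ∀ f : X → ℕ → ℕ, Continuous f → ∃ g : ℕ → ℕ, ∀ x, ∀ᶠ n in atTop, f x n ≤ g n) :
    HurewiczProperty X := by
  intro U hU
  rcases isEmpty_or_nonempty X with hempty | hne
  · exact ⟨fun _ => ∅, fun _ => ⟨empty_subset _, finite_empty⟩, isEmptyElim⟩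
  choose W hWc hWU hWcov using fun n => exists_isClopen_seq_refinement hX (hU n).1 (hU n).2
  choose u huU hWu using hWU
  choose f hf hfW using fun n => exists_continuous_mem_of_isClopen_cover (hWc n) (hWcov n)
  obtain ⟨g, hg⟩ := hB (fun x n => f n x) (continuous_pi hf)
  refine ⟨fun n => u n '' Iic (g n),
    fun n => ⟨image_subset_iff.2 fun k _ => huU n k, (finite_Iic _).image _⟩, fun x => ?_⟩
  filter_upwards [hg x] with n hn
  exact ⟨u n (f n x), mem_image_of_mem _ hn, hWu n _ (hfW n x)⟩

end HurewiczProperty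

theorem hurewicz_iff_continuous_images_bounded_general
    (X : Type*) [TopologicalSpace X]
    [SecondCountableTopology X]
    (hzd : TopologicalSpace.IsTopologicalBasis {s : Set X | IsClopen s}) :
    HurewiczProperty X ↔
      ∀ f : X → (ℕ → ℕ), Continuous f →
        ∃ g : ℕ → ℕ, ∀ x : X, ∀ᶠ n in atTop, f x n ≤ g n :=
  ⟨fun hH _ hf => hH.exists_eventually_le hf, HurewiczProperty.of_forall_exists_eventually_le hzd⟩

/-- Hurewicz's classical theorem: a separable metrizable zero-dimensional space has the
Hurewicz property iff every continuous image of it in the Baire space is bounded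
with respect to eventual domination. -/
theorem hurewicz_iff_continuous_images_bounded
    (X : Type*) [TopologicalSpace X] [TopologicalSpace.MetrizableSpace X]
    [SecondCountableTopology X]
    (hzd : TopologicalSpace.IsTopologicalBasis {s : Set X | IsClopen s}) :
    HurewiczProperty X ↔
      ∀ f : X → (ℕ → ℕ), Continuous f →
        ∃ g : ℕ → ℕ, ∀ x : X, ∀ᶠ n in atTop, f x n ≤ g n :=
  hurewicz_iff_continuous_images_bounded_general X hzd
end

section
/- Every Q-point ultrafilter on ω has nonempty intersection with the van der Waerden ideal; that is, every Q-point contains a set that is AP-small (contains no arbitrarily long arithmetic progressions). -/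
/-!
Partition `ℕ` into the dyadic blocks `[2^k, 2^(k+1))`. A Q-point contains a selector `A`
for this partition. Among three points `x < y < z` of `A` the blocks strictly increase, so
`z ≥ 2^(log x + 2) > 2x`. In a progression `a + i d`, however, `a + 4d ≤ 2(a + 2d)`, so `A`
contains no progression of length five.
-/

/-- An ultrafilter on ℕ is a Q-point if for every partition of ℕ into finite pieces
there is a member of the ultrafilter meeting each piece in at most one point.
(The partition is coded by a function `p` with finite fibers.) -/
def IsQPoint (U : Ultrafilter ℕ) : Prop :=
  ∀ p : ℕ → ℕ, (∀ k, (p ⁻¹' {k}).Finite) →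
    ∃ A ∈ U, ∀ k, (A ∩ p ⁻¹' {k}).Subsingleton

/-- The van der Waerden ideal: sets containing no arbitrarily long arithmetic
progressions. -/
def VdWIdeal : Set (Set ℕ) :=
  {A | ¬ ∀ k : ℕ, ∃ a d : ℕ, 0 < d ∧ ∀ i < k, a + i * d ∈ A}

lemma Nat.finite_preimage_log {b : ℕ} (hb : 1 < b) (k : ℕ) : (Nat.log b ⁻¹' {k}).Finite :=
  (Set.finite_Iio (b ^ (k + 1))).subset fun n hn => by
    simpa [show Nat.log b n = k from hn] using Nat.lt_pow_succ_log_self hb n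

lemma Set.injOn_of_subsingleton_inter_preimage {α β : Type*} {f : α → β} {A : Set α}
    (h : ∀ k, (A ∩ f ⁻¹' {k}).Subsingleton) : A.InjOn f :=
  fun _ hx y hy hxy => h (f y) ⟨hx, hxy⟩ ⟨hy, rfl⟩

lemma Nat.log_two_le_succ_of_le_two_mul {x y : ℕ} (h : y ≤ 2 * x) :
    Nat.log 2 y ≤ Nat.log 2 x + 1 := by
  rcases Nat.eq_zero_or_pos x with rfl | hx
  · simp_all
  · calc Nat.log 2 y ≤ Nat.log 2 (x * 2) := Nat.log_mono_right (by omega)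
      _ = Nat.log 2 x + 1 := Nat.log_mul_base one_lt_two hx.ne'

lemma two_mul_lt_of_injOn_log_two {A : Set ℕ} (hA : A.InjOn (Nat.log 2)) {x y z : ℕ}
    (hx : x ∈ A) (hy : y ∈ A) (hz : z ∈ A) (hxy : x < y) (hyz : y < z) : 2 * x < z := by
  have hlog_lt {m n : ℕ} (hm : m ∈ A) (hn : n ∈ A) (hmn : m < n) :
      Nat.log 2 m < Nat.log 2 n :=
    (Nat.log_mono_right hmn.le).lt_of_ne fun h => hmn.ne (hA hm hn h)
  have := hlog_lt hx hy hxy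
  have := hlog_lt hy hz hyz
  by_contra! hzx
  have := Nat.log_two_le_succ_of_le_two_mul hzx
  omega

lemma not_forall_ap_five_of_injOn_log_two {A : Set ℕ} (hA : A.InjOn (Nat.log 2)) {a d : ℕ}
    (hd : 0 < d) : ¬ ∀ i < 5, a + i * d ∈ A := fun hAP => by
  have := two_mul_lt_of_injOn_log_two hA (hAP 2 (by norm_num)) (hAP 3 (by norm_num))
    (hAP 4 (by norm_num)) (by omega) (by omega)
  omega

/-- Every Q-point has nonempty intersection with the van der Waerden ideal. -/
theorem qPoint_meets_vdWIdeal (U : Ultrafilter ℕ) (hU : IsQPoint U) :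
    ∃ A ∈ U, A ∈ VdWIdeal := by
  obtain ⟨A, hAU, hsel⟩ := hU (Nat.log 2) (Nat.finite_preimage_log one_lt_two)
  refine ⟨A, hAU, fun hAP => ?_⟩
  obtain ⟨a, d, hd, hAP5⟩ := hAP 5
  exact not_forall_ap_five_of_injOn_log_two (Set.injOn_of_subsingleton_inter_preimage hsel) hd
    hAP5
end

section
/- Assuming Martin's axiom for countable posets (equivalently, cov(meager) = 𝔠), there exists a rapid ultrafilter U on ω such that every member of U contains arithmetic progressions of arbitrary finite length (i.e., U ∩ W = ∅ where W is the van der Waerden ideal). -/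
open Filter

/-- An ultrafilter on ℕ is rapid if for every `f : ℕ → ℕ` there is a member whose
increasing enumeration dominates `f` everywhere. -/
def IsRapid (U : Ultrafilter ℕ) : Prop :=
  ∀ f : ℕ → ℕ, ∃ A ∈ U, A.Infinite ∧ ∀ n, f n ≤ Nat.nth (· ∈ A) n

/-!
Sets containing arbitrarily long arithmetic progressions ("AP-rich" sets) form a partition
regular family: this is van der Waerden's theorem, obtained from Hales–Jewett. Enumerate in
order type `𝔠` the tasks "decide `A`" (`A ⊆ ℕ`) and "dominate `f`" (`f : ℕ → ℕ`), and handle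
them one at a time, keeping every finite intersection of the chosen sets AP-rich. Partition
regularity lets us add `A` or its complement. For `f`, Martin's axiom for countable posets,
applied to finite sets that are sparse relative to `f`, produces an `f`-sparse set meeting each
of the fewer than `𝔠` finite intersections in arbitrarily long progressions. The chosen sets
generate an ultrafilter, which is then rapid and disjoint from the van der Waerden ideal.
Countable Martin's axiom follows from `cov(meagre) = 𝔠` because a point of the Baire space
outside fewer than `𝔠` closed nowhere dense sets codes a sufficiently generic chain.
-/

universe u

open Set
open scoped Cardinal

def APRich (A : Set ℕ) : Prop :=
  ∀ k : ℕ, ∃ a d : ℕ, 0 < d ∧ ∀ i < k, a + i * d ∈ A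

namespace APRich

variable {A B : Set ℕ}

theorem mono (h : APRich A) (hAB : A ⊆ B) : APRich B := fun k =>
  let ⟨a, d, hd, hA⟩ := h k
  ⟨a, d, hd, fun i hi => hAB (hA i hi)⟩

theorem exists_ap_ge (h : APRich A) (k M : ℕ) :
    ∃ a d : ℕ, 0 < d ∧ M ≤ a ∧ ∀ i < k, a + i * d ∈ A := by
  obtain ⟨a, d, hd, hA⟩ := h (M + k)
  refine ⟨a + M * d, d, hd, by nlinarith, fun i hi => ?_⟩
  simpa [add_assoc, add_mul] using hA (M + i) (by omega)

theorem infinite (h : APRich A) : A.Infinite :=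
  infinite_of_forall_exists_gt fun M =>
    let ⟨a, d, _, hM, hA⟩ := h.exists_ap_ge 1 (M + 1)
    ⟨a, by simpa using hA 0 one_pos, by omega⟩

end APRich

theorem apRich_univ : APRich univ := fun _ => ⟨0, 1, one_pos, fun _ _ => trivial⟩

theorem Combinatorics.Line.exists_sum_eq_ap {ι : Type*} [Fintype ι] {k : ℕ}
    (l : Combinatorics.Line (Fin (k + 1)) ι) :
    ∃ b d : ℕ, 0 < d ∧ ∀ x : Fin (k + 1), ∑ i, (l x i : ℕ) = b + x * d := by
  classical
  refine ⟨∑ i, (l 0 i : ℕ), (Finset.univ.filter fun i => l.idxFun i = none).card,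
    Finset.card_pos.2 ?_, fun x => ?_⟩
  · obtain ⟨i, hi⟩ := l.proper
    exact ⟨i, by simpa using hi⟩
  have hcoord : ∀ i, (l x i : ℕ) = l 0 i + if l.idxFun i = none then (x : ℕ) else 0 := by
    intro i
    cases h : l.idxFun i <;> simp [h]
  simp only [hcoord, Finset.sum_add_distrib, Finset.sum_ite, Finset.sum_const_zero,
    Finset.sum_const, smul_eq_mul, add_zero, mul_comm]

theorem exists_bound_monochromatic_ap (k : ℕ) (κ : Type*) [Finite κ] :
    ∃ N, ∀ C : ℕ → κ, ∃ a d : ℕ, 0 < d ∧ ∀ i ≤ k, a + i * d < N ∧ C (a + i * d) = C a := by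
  obtain ⟨ι, _, hι⟩ := Combinatorics.Line.exists_mono_in_high_dimension (Fin (k + 1)) κ
  refine ⟨k * Fintype.card ι + 1, fun C => ?_⟩
  obtain ⟨l, c, hl⟩ := hι fun v => C (∑ i, (v i : ℕ))
  obtain ⟨b, d, hd, hsum⟩ := l.exists_sum_eq_ap
  have hC : ∀ i ≤ k, C (b + i * d) = c := fun i hi => by
    have := hl ⟨i, by omega⟩
    dsimp only at this
    rwa [hsum] at this
  refine ⟨b, d, hd, fun i hi =>
    ⟨?_, by rw [hC i hi, ← hC 0 (Nat.zero_le k), zero_mul, add_zero]⟩⟩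
  have hle : ∑ j, (l ⟨i, by omega⟩ j : ℕ) ≤ ∑ _j : ι, k :=
    Finset.sum_le_sum fun j _ => Nat.lt_succ_iff.1 (l ⟨i, by omega⟩ j).isLt
  simp only [hsum, Finset.sum_const, Finset.card_univ, smul_eq_mul] at hle
  nlinarith

theorem APRich.union {A B : Set ℕ} (h : APRich (A ∪ B)) : APRich A ∨ APRich B := by
  by_contra! hAB
  simp only [APRich, not_forall, not_exists, not_and] at hAB
  obtain ⟨⟨kA, hA⟩, kB, hB⟩ := hAB
  obtain ⟨N, hN⟩ := exists_bound_monochromatic_ap (max kA kB) Prop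
  obtain ⟨a₀, d₀, hd₀, hAB⟩ := h N
  obtain ⟨a, d, hd, hmono⟩ := hN fun j => a₀ + j * d₀ ∈ A
  have hshift : ∀ i, a₀ + (a + i * d) * d₀ = a₀ + a * d₀ + i * (d * d₀) := fun i => by ring
  by_cases haA : a₀ + a * d₀ ∈ A
  · obtain ⟨i, hi, hiA⟩ := hA (a₀ + a * d₀) (d * d₀) (Nat.mul_pos hd hd₀)
    rw [← hshift, (hmono i (by omega)).2] at hiA
    exact hiA haA
  · obtain ⟨i, hi, hiB⟩ := hB (a₀ + a * d₀) (d * d₀) (Nat.mul_pos hd hd₀)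
    have hiA : a₀ + (a + i * d) * d₀ ∉ A := by rw [(hmono i (by omega)).2]; exact haA
    rw [← hshift] at hiB
    exact (hAB _ (hmono i (by omega)).1).elim hiA hiB

theorem apRich_inf_principal_or_compl {F : Filter ℕ} (hF : ∀ X ∈ F, APRich X) (A : Set ℕ) :
    (∀ X ∈ F ⊓ 𝓟 A, APRich X) ∨ ∀ X ∈ F ⊓ 𝓟 Aᶜ, APRich X := by
  by_contra! h
  obtain ⟨⟨X, hX, hXA⟩, Y, hY, hYA⟩ := h
  rw [mem_inf_principal'] at hX hY
  have hXY : APRich (X ∪ Y) := (hF _ (inter_mem hX hY)).mono fun x ⟨hx, hy⟩ => by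
    by_cases hxA : x ∈ A
    exacts [Or.inl (hx.resolve_left (not_not.2 hxA)),
      Or.inr (hy.resolve_left (by simpa using hxA))]
  exact hXY.union.elim hXA hYA

def CovMeagreEqContinuum : Prop :=
  ∀ 𝒜 : Set (Set (ℕ → ℕ)), (∀ A ∈ 𝒜, IsMeagre A) → ⋃₀ 𝒜 = univ → 𝔠 ≤ #𝒜

/-- An increasing sequence meeting every `D i` generates the filter asked for by Martin's axiom. -/
def MartinAxiomCountable : Prop :=
  ∀ (P : Type) [Preorder P] [Countable P] [Nonempty P] {ι : Type} (D : ι → Set P),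
    #ι < 𝔠 → (∀ i, IsCofinal (D i)) → ∃ q : ℕ → P, Monotone q ∧ ∀ i, ∃ n, q n ∈ D i

section GenericChain

variable {P : Type*} [Preorder P] (p : ℕ → P)

open Classical in
/-- Reading `x` as a sequence of codes `p (x n)` of conditions, the chain moves to the next coded
condition whenever it extends the current one. -/
noncomputable def genericChain (x : ℕ → ℕ) : ℕ → P
  | 0 => p (x 0)
  | n + 1 => if genericChain x n ≤ p (x (n + 1)) then p (x (n + 1)) else genericChain x n

theorem genericChain_monotone (x : ℕ → ℕ) : Monotone (genericChain p x) :=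
  monotone_nat_of_le_succ fun n => by
    rw [genericChain]
    split_ifs with h
    exacts [h, le_rfl]

theorem genericChain_congr {x y : ℕ → ℕ} {n : ℕ} (h : ∀ i ≤ n, x i = y i) :
    genericChain p x n = genericChain p y n := by
  induction n with
  | zero => simp [genericChain, h 0 le_rfl]
  | succ n ih => rw [genericChain, genericChain, ih fun i hi => h i (by omega), h (n + 1) le_rfl]

theorem isOpen_setOf_exists_genericChain_mem (D : Set P) :
    IsOpen {x | ∃ n, genericChain p x n ∈ D} := by
  refine isOpen_iff_forall_mem_open.2 fun x ⟨n, hn⟩ =>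
    ⟨PiNat.cylinder x (n + 1), fun y hy => ⟨n, ?_⟩, PiNat.isOpen_cylinder _ _ _,
      PiNat.self_mem_cylinder _ _⟩
  rwa [genericChain_congr p fun i hi => PiNat.mem_cylinder_iff.1 hy i (by omega)]

theorem dense_setOf_exists_genericChain_mem (hp : Function.Surjective p) {D : Set P}
    (hD : IsCofinal D) : Dense {x | ∃ n, genericChain p x n ∈ D} := by
  refine (PiNat.isTopologicalBasis_cylinders fun _ => ℕ).dense_iff.2 ?_
  rintro _ ⟨x, n, rfl⟩ -
  obtain ⟨b, hbD, hb⟩ := hD (genericChain p x n)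
  obtain ⟨m, rfl⟩ := hp b
  set y := Function.update x (n + 1) m
  have hxy : genericChain p y n = genericChain p x n :=
    genericChain_congr p fun i hi => Function.update_of_ne (by omega) _ _
  refine ⟨y, PiNat.mem_cylinder_iff.2 fun i hi => Function.update_of_ne (by omega) _ _,
    n + 1, ?_⟩
  have hy : y (n + 1) = m := Function.update_self ..
  rw [genericChain, hxy, hy, if_pos hb]
  exact hbD

end GenericChain

theorem martinAxiomCountable_of_covMeagre (h : CovMeagreEqContinuum) : MartinAxiomCountable := by
  intro P _ _ _ ι D hι hD
  obtain ⟨p, hp⟩ := exists_surjective_nat P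
  let G i := {x | ∃ n, genericChain p x n ∈ D i}
  have hG : ∀ i, IsMeagre (G i)ᶜ := fun i => by
    rw [IsMeagre, compl_compl]
    exact residual_of_dense_open (isOpen_setOf_exists_genericChain_mem p _)
      (dense_setOf_exists_genericChain_mem p hp (hD i))
  obtain ⟨x, hx⟩ : ∃ x, ∀ i, x ∈ G i := by
    by_contra! hcover
    have hcard := h (range fun i => (G i)ᶜ) (forall_mem_range.2 hG)
      (sUnion_range _ ▸ eq_univ_of_forall fun x => mem_iUnion.2 (hcover x))
    exact (hcard.trans Cardinal.mk_range_le).not_gt hι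
  exact ⟨genericChain p x, genericChain_monotone p x, hx⟩

theorem Nat.count_mem_le_card (s : Finset ℕ) (m : ℕ) : Nat.count (· ∈ s) m ≤ s.card := by
  rw [Nat.count_eq_card_filter_range]
  exact Finset.card_le_card fun x hx => (Finset.mem_filter.1 hx).2

theorem Cardinal.mk_prod_nat_lt {ι : Type} {c : Cardinal} (hc : ℵ₀ < c) (hι : #ι < c) :
    #(ι × ℕ) < c := by
  rw [Cardinal.mk_prod, Cardinal.lift_id, Cardinal.lift_id, Cardinal.mk_nat]
  exact Cardinal.mul_lt_of_lt hc.le hι hc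

theorem exists_sparse_superset_with_ap {f : ℕ → ℕ} {c : Finset ℕ}
    (hc : ∀ n, Nat.count (· ∈ c) (f n) ≤ n) {B : Set ℕ} (hB : APRich B) (k : ℕ) :
    ∃ c' : Finset ℕ, c ⊆ c' ∧ (∀ n, Nat.count (· ∈ c') (f n) ≤ n) ∧
      ∃ a d : ℕ, 0 < d ∧ ∀ j < k, a + j * d ∈ B ∩ c' := by
  classical
  -- Start the progression above `f n` for all `n < c.card + k`; for larger `n` the size of
  -- `c'` already bounds the count.
  obtain ⟨a, d, hd, hfa, hAP⟩ := hB.exists_ap_ge k ((Finset.range (c.card + k)).sup f)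
  set new := (Finset.range k).image fun j => a + j * d
  refine ⟨c ∪ new, Finset.subset_union_left, fun n => ?_, a, d, hd, fun j hj =>
    ⟨hAP j hj, Finset.mem_union_right _ (Finset.mem_image.2 ⟨j, Finset.mem_range.2 hj, rfl⟩)⟩⟩
  by_cases hn : n < c.card + k
  · have hfn : f n ≤ a := (Finset.le_sup (Finset.mem_range.2 hn)).trans hfa
    refine (Nat.count_mono_left fun x hx hxc => ?_).trans (hc n)
    rcases Finset.mem_union.1 hxc with hxc | hxn
    · exact hxc
    · obtain ⟨j, -, rfl⟩ := Finset.mem_image.1 hxn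
      omega
  · calc Nat.count (· ∈ c ∪ new) (f n) ≤ (c ∪ new).card := Nat.count_mem_le_card _ _
      _ ≤ c.card + new.card := Finset.card_union_le _ _
      _ ≤ c.card + k := by grw [Finset.card_image_le, Finset.card_range]
      _ ≤ n := by omega

open Classical in
theorem exists_sparse_apRich_inter (hMA : MartinAxiomCountable) (f : ℕ → ℕ) {ι : Type}
    (B : ι → Set ℕ) (hι : #ι < 𝔠) (hB : ∀ i, APRich (B i)) :
    ∃ S : Set ℕ, (∀ n, Nat.count (· ∈ S) (f n) ≤ n) ∧ ∀ i, APRich (B i ∩ S) := by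
  -- For infinite `S`, `Nat.count (· ∈ S) (f n) ≤ n` means `f n ≤ Nat.nth (· ∈ S) n`, but unlike
  -- the latter it passes from `S` to its finite subsets.
  let P := {c : Finset ℕ // ∀ n, Nat.count (· ∈ c) (f n) ≤ n}
  have : Nonempty P := ⟨⟨∅, fun n => by simp⟩⟩
  let D (ik : ι × ℕ) : Set P := {c | ∃ a d, 0 < d ∧ ∀ j < ik.2, a + j * d ∈ B ik.1 ∩ c.1}
  have hD : ∀ ik, IsCofinal (D ik) := fun ⟨i, k⟩ c =>
    let ⟨c', hcc', hc', hAP⟩ := exists_sparse_superset_with_ap c.2 (hB i) k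
    ⟨⟨c', hc'⟩, hAP, hcc'⟩
  obtain ⟨q, hq, hqD⟩ := hMA P D (Cardinal.mk_prod_nat_lt Cardinal.aleph0_lt_continuum hι) hD
  let S := ⋃ m, ((q m).1 : Set ℕ)
  refine ⟨S, fun n => ?_, fun i k => ?_⟩
  · obtain ⟨m, hm⟩ := (Monotone.directed_le fun _ _ h => Finset.coe_subset.2 (hq h) :
      Directed (· ⊆ ·) fun m => ((q m).1 : Set ℕ)).exists_mem_subset_of_finset_subset_biUnion
        (s := (Finset.range (f n)).filter (· ∈ S)) fun x hx => (Finset.mem_filter.1 hx).2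
    calc Nat.count (· ∈ S) (f n) ≤ Nat.count (· ∈ (q m).1) (f n) :=
          Nat.count_mono_left fun x hx hxS => hm (by simp [hx, hxS])
      _ ≤ n := (q m).2 n
  · obtain ⟨m, a, d, hd, hAP⟩ := hqD (i, k)
    exact ⟨a, d, hd, fun j hj => ⟨(hAP j hj).1, mem_iUnion.2 ⟨m, (hAP j hj).2⟩⟩⟩

theorem Set.Finite.exists_subset_image_Iic {ι α : Type*} [LinearOrder ι] {a : ι → α} {s : Set ι}
    {t : Set α} (ht : t.Finite) (hne : t.Nonempty) (hts : t ⊆ a '' s) :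
    ∃ j ∈ s, t ⊆ a '' Iic j := by
  obtain ⟨u, hus, hu, rfl⟩ := Set.exists_subset_image_finite_and.1 ⟨t, hts, ht, rfl⟩
  obtain ⟨j, hj, hmax⟩ := Set.exists_max_image u id hu hne.of_image
  exact ⟨j, hus hj, image_mono fun i hi => hmax i hi⟩

theorem exists_family_of_finiteCharacter_of_extend {α T : Type u} (Good : Set α → Prop)
    (Sat : T → α → Prop) (h_empty : Good ∅) (h_finite : ∀ s, Good s ↔ ∀ t ⊆ s, t.Finite → Good t)
    (h_step : ∀ s, Good s → #s < #T → ∀ τ, ∃ a, Sat τ a ∧ Good (insert a s)) :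
    ∃ s, Good s ∧ ∀ τ, ∃ a ∈ s, Sat τ a := by
  classical
  rcases isEmpty_or_nonempty T with hT | hT
  · exact ⟨∅, h_empty, isEmptyElim⟩
  have h_mono {s t : Set α} (hst : s ⊆ t) (ht : Good t) : Good s :=
    (h_finite _).2 fun u hu hfin => (h_finite _).1 ht u (hu.trans hst) hfin
  have : Nonempty α := ⟨(h_step ∅ h_empty (by simpa using (Cardinal.mk_ne_zero T).bot_lt)
    (Classical.arbitrary T)).choose⟩
  have : ∀ s τ, ∃ a, Good s → #s < #T → Sat τ a ∧ Good (insert a s) := fun s τ =>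
    if hs : Good s ∧ #s < #T then (h_step s hs.1 hs.2 τ).imp fun _ h _ _ => h
    else ⟨Classical.arbitrary α, fun h1 h2 => (hs ⟨h1, h2⟩).elim⟩
  choose next h_next using this
  obtain ⟨e⟩ : Nonempty ((#T).ord.ToType ≃ T) := Cardinal.eq.1 (Cardinal.mk_ord_toType _)
  obtain ⟨a, ha⟩ : ∃ a : (#T).ord.ToType → α, ∀ i, a i = next (a '' Iio i) (e i) :=
    ⟨WellFoundedLT.fix fun i rec => next (range fun j : Iio i => rec j j.2) (e i),
      fun i => by rw [WellFoundedLT.fix_eq, image_eq_range]⟩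
  have h_stage (i) (hi : Good (a '' Iio i)) : Sat (e i) (a i) ∧ Good (a '' Iic i) := by
    rw [← Iio_insert, image_insert_eq, ha i]
    exact h_next _ _ hi (Cardinal.mk_image_le.trans_lt ((Cardinal.mk_Iio_lt i
      (by rw [Cardinal.mk_ord_toType, Ordinal.type_toType])).trans_eq (Cardinal.mk_ord_toType _)))
  have h_image (s) (h : ∀ j ∈ s, Good (a '' Iic j)) : Good (a '' s) :=
    (h_finite _).2 fun t hts ht => t.eq_empty_or_nonempty.elim (fun h0 => h0 ▸ h_empty)
      fun hne => let ⟨j, hj, htj⟩ := ht.exists_subset_image_Iic hne hts; h_mono htj (h j hj)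
  have h_Iic (i) : Good (a '' Iic i) := by
    induction i using WellFoundedLT.induction with
    | _ i ih => exact (h_stage i (h_image _ ih)).2
  refine ⟨range a, image_univ ▸ h_image univ fun j _ => h_Iic j, fun τ =>
    ⟨a (e.symm τ), mem_range_self _, ?_⟩⟩
  simpa using (h_stage (e.symm τ) (h_image _ fun j _ => h_Iic j)).1

theorem Filter.generate_insert {α : Type*} (s : Set (Set α)) (A : Set α) :
    generate (insert A s) = generate s ⊓ 𝓟 A := by
  rw [insert_eq, generate_union, generate_singleton, inf_comm]

theorem Filter.forall_mem_generate_iff_finite {α : Type*} {Q : Set α → Prop}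
    (hQ : ∀ ⦃A B⦄, A ⊆ B → Q A → Q B) (s : Set (Set α)) :
    (∀ A ∈ generate s, Q A) ↔ ∀ t ⊆ s, t.Finite → ∀ A ∈ generate t, Q A := by
  refine ⟨fun h t hts _ A hA =>
    h A (le_generate_iff.2 (fun B hB => mem_generate_of_mem (hts hB)) hA), fun h A hA => ?_⟩
  obtain ⟨t, hts, ht, htA⟩ := mem_generate_iff.1 hA
  exact hQ htA (h t hts ht _ ((hasBasis_generate t).mem_of_mem ⟨ht, subset_rfl⟩))

theorem Cardinal.mk_finite_subsets_lt {α : Type*} {s : Set α} {c : Cardinal} (hc : ℵ₀ ≤ c)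
    (hs : #s < c) : #{t : Set α // t.Finite ∧ t ⊆ s} < c := by
  have hle : #{t : Set α // t.Finite ∧ t ⊆ s} ≤ #(Finset s) := by
    refine Cardinal.mk_le_of_injective
      (f := fun t => (t.2.1.preimage Subtype.val_injective.injOn).toFinset) ?_
    rintro ⟨t, ht, hts⟩ ⟨u, hu, hus⟩ h
    have := congrArg (fun v : Finset s => Subtype.val '' (v : Set s)) h
    simp only [Finite.coe_toFinset, Subtype.image_preimage_coe, inter_eq_right.2 hts,
      inter_eq_right.2 hus] at this
    exact Subtype.ext this
  refine hle.trans_lt ?_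
  rcases finite_or_infinite s with hfin | hinf
  · exact Cardinal.mk_lt_aleph0.trans_le hc
  · rwa [Cardinal.mk_finset_of_infinite]

def Settles : (ℕ → ℕ) ⊕ Set ℕ → Set ℕ → Prop
  | .inl f, S => S.Infinite ∧ ∀ n, f n ≤ Nat.nth (· ∈ S) n
  | .inr A, S => S = A ∨ S = Aᶜ

theorem exists_settles_apRich_generate_insert (hMA : MartinAxiomCountable) {s : Set (Set ℕ)}
    (hs : ∀ A ∈ generate s, APRich A) (hcard : #s < 𝔠) (τ : (ℕ → ℕ) ⊕ Set ℕ) :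
    ∃ S, Settles τ S ∧ ∀ A ∈ generate (insert S s), APRich A := by
  classical
  simp only [generate_insert]
  cases τ with
  | inr A =>
    rcases apRich_inf_principal_or_compl hs A with h | h
    exacts [⟨A, Or.inl rfl, h⟩, ⟨Aᶜ, Or.inr rfl, h⟩]
  | inl f =>
    obtain ⟨S, hS, hBS⟩ := exists_sparse_apRich_inter hMA f
      (fun t : {t : Set (Set ℕ) // t.Finite ∧ t ⊆ s} => ⋂₀ t.1)
      (Cardinal.mk_finite_subsets_lt Cardinal.aleph0_le_continuum hcard)
      fun t => hs _ ((hasBasis_generate s).mem_of_mem t.2)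
    have hrich : ∀ A ∈ generate s ⊓ 𝓟 S, APRich A := fun A hA =>
      let ⟨t, ht, htA⟩ := ((hasBasis_generate s).inf_principal S).mem_iff.1 hA
      (hBS ⟨t, ht⟩).mono htA
    have hSinf : S.Infinite := (hrich S (mem_inf_of_right (mem_principal_self S))).infinite
    exact ⟨S, ⟨hSinf, fun n => (Nat.count_le_iff_le_nth (p := (· ∈ S)) hSinf).1 (hS n)⟩, hrich⟩

/-- Assuming Martin's axiom for countable posets (equivalently `cov(meager) = 𝔠`,
stated here as: the Baire space is not covered by fewer than continuum many meager
sets), there is a rapid ultrafilter disjoint from the van der Waerden ideal, i.e.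
each of whose members contains arbitrarily long arithmetic progressions. -/
theorem rapid_ultrafilter_avoiding_vdW_of_covMeager_eq_continuum
    (hMA : ∀ 𝒜 : Set (Set (ℕ → ℕ)), (∀ A ∈ 𝒜, IsMeagre A) → ⋃₀ 𝒜 = Set.univ →
      Cardinal.continuum ≤ Cardinal.mk 𝒜) :
    ∃ U : Ultrafilter ℕ, IsRapid U ∧ ∀ A ∈ U, A ∉ VdWIdeal := by
  have hT : #((ℕ → ℕ) ⊕ Set ℕ) = 𝔠 := by
    rw [Cardinal.mk_sum, Cardinal.mk_set_nat, Cardinal.mk_arrow]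
    simp only [Cardinal.lift_id, Cardinal.mk_nat, Cardinal.aleph0_power_aleph0,
      Cardinal.continuum_add_self]
  obtain ⟨s, hs, hsettles⟩ := exists_family_of_finiteCharacter_of_extend
    (fun s => ∀ A ∈ generate s, APRich A) Settles
    (fun A hA => by rw [generate_empty, mem_top] at hA; exact hA ▸ apRich_univ)
    (forall_mem_generate_iff_finite fun _ _ hAB hA => hA.mono hAB)
    fun s hs hcard => exists_settles_apRich_generate_insert
      (martinAxiomCountable_of_covMeagre hMA) hs (hT ▸ hcard)
  have : (generate s).NeBot := ⟨fun h => by simpa using (hs ∅ (h ▸ mem_bot)).infinite⟩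
  have hU := Ultrafilter.of_le (generate s)
  refine ⟨.of (generate s), fun f => ?_, fun A hA => ?_⟩
  · obtain ⟨S, hSs, hSinf, hS⟩ := hsettles (.inl f)
    exact ⟨S, hU (mem_generate_of_mem hSs), hSinf, hS⟩
  · obtain ⟨S, hSs, rfl | rfl⟩ := hsettles (.inr A)
    · exact not_not.2 (hs _ (mem_generate_of_mem hSs))
    · exact absurd (hU (mem_generate_of_mem hSs)) (Ultrafilter.compl_notMem_iff.2 hA)
end

section
/- If X is the countably infinite metric fan M (the quotient of ω copies of a convergent sequence identified at the limit point), then the space C_k(M, 2) of continuous functions from M to the discrete two-point space with the compact-open topology is sequential. -/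
/-- The underlying set of the metric fan: countably many convergent sequences
(the columns `{(n, k) : k ∈ ℕ}`) with their limit points identified to the single
point `∞ = none`. -/
def MetricFan : Type := Option (ℕ × ℕ)

/-- The topology of the metric fan: points of `ω × ω` are isolated, and basic
neighborhoods of `∞` are the sets `{(n, k) : k ≥ m} ∪ {∞}` for `m ∈ ℕ`
(these are the balls of the standard metric `d((n,k), ∞) = 1/(k+1)`). -/
instance : TopologicalSpace MetricFan where
  IsOpen U := (none ∈ U) → ∃ m : ℕ, ∀ n k : ℕ, m ≤ k → some (n, k) ∈ U
  isOpen_univ := fun _ => ⟨0, fun _ _ _ => Set.mem_univ _⟩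
  isOpen_inter := by
    rintro U V hU hV ⟨hU', hV'⟩
    obtain ⟨m₁, h₁⟩ := hU hU'
    obtain ⟨m₂, h₂⟩ := hV hV'
    exact ⟨max m₁ m₂, fun n k hk =>
      ⟨h₁ n k (le_trans (le_max_left _ _) hk), h₂ n k (le_trans (le_max_right _ _) hk)⟩⟩
  isOpen_sUnion := by
    rintro S hS ⟨U, hU, hnU⟩
    obtain ⟨m, hm⟩ := hS U hU hnU
    exact ⟨m, fun n k hk => ⟨U, hU, hm n k hk⟩⟩

/-!
Pointwise `xor` makes `C(M, 2)` a topological group, so it suffices to separate `0` from a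
sequentially closed set `B ∌ 0` by a neighbourhood. A map vanishing at `∞` is a function on
`ω × ω` supported below some level `m`, and among maps supported below a fixed level the
compact-open topology is the product topology of `2^(ω × ω)`; so the traces of `B` there are
sequentially closed, hence closed and compact in the compact metrizable space `2^(ω × ω)`.
Compactness then lets one choose, level by level, finite sets of points such that every element
of `B` vanishing at `∞` is nonzero somewhere on their union `R`. Since `R` has only finitely
many points below each level, `{∞} ∪ R` is compact, and the maps vanishing on it form the
required neighbourhood of `0`.
-/

open Set Filter Topology Function

@[to_additive]
theorem sequentialSpace_of_one_notMem_closure {G : Type*} [TopologicalSpace G] [Group G]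
    [IsTopologicalGroup G] (h : ∀ B : Set G, IsSeqClosed B → 1 ∉ B → 1 ∉ closure B) :
    SequentialSpace G where
  isClosed_of_seq A hA := by
    refine isClosed_of_closure_subset fun x hx => ?_
    let τ := Homeomorph.mulLeft x
    have h1 : (1 : G) ∈ closure (τ ⁻¹' A) := by
      rw [← τ.preimage_closure]
      simpa [τ] using hx
    simpa [τ] using not_imp_not.mp (h _ (hA.preimage τ.continuous.seqContinuous)) h1

theorem ContinuousMap.tendsto_nhds_of_forall_isCompact_eventually_eqOn {α X Y : Type*}
    [TopologicalSpace X] [TopologicalSpace Y] {l : Filter α} {f : α → C(X, Y)} {g : C(X, Y)}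
    (h : ∀ K, IsCompact K → ∀ᶠ a in l, EqOn g (f a) K) : Tendsto f l (𝓝 g) :=
  tendsto_nhds_compactOpen.mpr fun K hK _ _ hgK => (h K hK).mono fun _ => hgK.congr

theorem IsCompact.exists_finset_forall_eq_notMem {ι : Type*} {X : ι → Type*}
    [∀ i, TopologicalSpace (X i)] {S T : Set (∀ i, X i)} (hS : IsCompact S) (hT : IsClosed T)
    (hST : Disjoint S T) :
    ∃ Q : Finset ι, ∀ s ∈ S, ∀ u : ∀ i, X i, (∀ i ∈ Q, u i = s i) → u ∉ T := by
  classical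
  have hcyl : ∀ s ∈ S, ∃ (I : Finset ι) (w : ∀ i, Set (X i)),
      (∀ i ∈ I, IsOpen (w i) ∧ s i ∈ w i) ∧ (I : Set ι).pi w ⊆ Tᶜ := fun s hs =>
    isOpen_pi_iff.mp hT.isOpen_compl s (hST.notMem_of_mem_left hs)
  choose! I w hw hIT using hcyl
  obtain ⟨t, htS, hcov⟩ := hS.elim_nhds_subcover (fun s => (I s : Set ι).pi (w s)) fun s hs =>
    (isOpen_set_pi (I s).finite_toSet fun i hi => (hw s hs i hi).1).mem_nhds
      fun i hi => (hw s hs i hi).2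
  refine ⟨t.sup I, fun s hs u hus => ?_⟩
  obtain ⟨s₀, hs₀, hss₀⟩ := mem_iUnion₂.mp (hcov hs)
  refine hIT s₀ (htS s₀ hs₀) fun i hi => ?_
  rw [hus _ (Finset.mem_sup.mpr ⟨s₀, hs₀, hi⟩)]
  exact hss₀ i hi

theorem isClosed_setOf_support_subset {α M : Type*} [Zero M] [TopologicalSpace M] [T1Space M]
    (A : Set α) : IsClosed {u : α → M | support u ⊆ A} := by
  have h : {u : α → M | support u ⊆ A} = ⋂ p ∈ Aᶜ, (fun u : α → M => u p) ⁻¹' {0} := by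
    ext u
    simp only [mem_ofPred_eq, support_subset_iff', mem_iInter, mem_preimage, mem_singleton_iff,
      mem_compl_iff]
  rw [h]
  exact isClosed_biInter fun p _ => isClosed_singleton.preimage (continuous_apply p)

namespace MetricFan

section

variable {ι M : Type*} [Zero M]

def supportedBelow (m : ℕ) : Set (ι × ℕ → M) := {u | support u ⊆ {p | p.2 < m}}

variable [TopologicalSpace M] [T1Space M]

theorem isClosed_supportedBelow (m : ℕ) : IsClosed (supportedBelow (ι := ι) (M := M) m) :=
  isClosed_setOf_support_subset _

variable [CompactSpace M]

theorem exists_finset_level_forall_support_meets {T : Set (ι × ℕ → M)} {m : ℕ}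
    (hT : IsClosed (T ∩ supportedBelow (m + 1))) {R : Set (ι × ℕ)}
    (hR : ∀ u ∈ T ∩ supportedBelow m, (support u ∩ R).Nonempty) :
    ∃ P : Finset (ι × ℕ), (∀ p ∈ P, p.2 = m) ∧
      ∀ u ∈ T ∩ supportedBelow (m + 1), (support u ∩ (R ∪ P)).Nonempty := by
  classical
  let S : Set (ι × ℕ → M) := supportedBelow m ∩ {u | support u ⊆ Rᶜ}
  have hS : IsCompact S :=
    ((isClosed_supportedBelow m).inter (isClosed_setOf_support_subset _)).isCompact
  have hST : Disjoint S (T ∩ supportedBelow (m + 1)) := by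
    refine disjoint_left.mpr fun u ⟨hum, huR⟩ ⟨huT, _⟩ => ?_
    obtain ⟨p, hpu, hpR⟩ := hR u ⟨huT, hum⟩
    exact huR hpu hpR
  obtain ⟨Q, hQ⟩ := hS.exists_finset_forall_eq_notMem hT hST
  refine ⟨Q.filter (·.2 = m), fun p hp => (Finset.mem_filter.mp hp).2, fun u hu => ?_⟩
  by_contra hdisj
  rw [not_nonempty_iff_eq_empty, ← disjoint_iff_inter_eq_empty] at hdisj
  let s := {p : ι × ℕ | p.2 ≠ m}.indicator u
  have hs : s ∈ S := by
    rw [mem_inter_iff, supportedBelow, mem_ofPred_eq, mem_ofPred_eq, support_indicator]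
    refine ⟨fun p ⟨hpm, hpu⟩ => ?_, fun p hp hpR => ?_⟩
    · exact lt_of_le_of_ne (Nat.le_of_lt_succ (hu.2 hpu)) hpm
    · exact hdisj.ne_of_mem hp.2 (Or.inl hpR) rfl
  refine hQ s hs u (fun p hp => ?_) hu
  by_cases hpm : p.2 = m
  · have hpu : p ∉ support u :=
      hdisj.notMem_of_mem_right (Or.inr (Finset.mem_filter.mpr ⟨hp, hpm⟩))
    rw [notMem_support.mp hpu]
    exact (indicator_of_notMem (s := {p : ι × ℕ | p.2 ≠ m}) (not_not.mpr hpm) u).symm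
  · exact (indicator_of_mem hpm u).symm

theorem exists_finite_below_forall_support_meets {T : Set (ι × ℕ → M)}
    (hT : ∀ m, IsClosed (T ∩ supportedBelow m)) (h0 : 0 ∉ T) :
    ∃ R : Set (ι × ℕ), (∀ m, {p ∈ R | p.2 < m}.Finite) ∧
      ∀ m, ∀ u ∈ T ∩ supportedBelow m, (support u ∩ R).Nonempty := by
  classical
  let Meets (m : ℕ) (R : Finset (ι × ℕ)) : Prop :=
    ∀ u ∈ T ∩ supportedBelow m, (support u ∩ R).Nonempty
  have step (m : ℕ) (R : Finset (ι × ℕ)) :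
      ∃ P : Finset (ι × ℕ), (∀ p ∈ P, p.2 = m) ∧ (Meets m R → Meets (m + 1) (R ∪ P)) := by
    by_cases hR : Meets m R
    · obtain ⟨P, hPm, hP⟩ := exists_finset_level_forall_support_meets (hT (m + 1)) hR
      refine ⟨P, hPm, fun _ => ?_⟩
      simpa only [Meets, Finset.coe_union] using hP
    · exact ⟨∅, by simp, fun h => absurd h hR⟩
  choose P hPm hP using step
  obtain ⟨R, hR_zero, hR_succ⟩ : ∃ R : ℕ → Finset (ι × ℕ),
      R 0 = ∅ ∧ ∀ m, R (m + 1) = R m ∪ P m (R m) :=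
    ⟨fun m => Nat.rec ∅ (fun k Rk => Rk ∪ P k Rk) m, rfl, fun _ => rfl⟩
  have hR_mono : Monotone R :=
    monotone_nat_of_le_succ fun m => (hR_succ m).symm ▸ Finset.subset_union_left
  have hR_level (m : ℕ) : ∀ p ∈ R m, p ∈ R (p.2 + 1) := by
    induction m with
    | zero => simp [hR_zero]
    | succ m ih =>
      intro p hp
      rw [hR_succ, Finset.mem_union] at hp
      rcases hp with hp | hp
      · exact ih p hp
      · rw [hPm m _ p hp, hR_succ]
        exact Finset.mem_union_right _ hp
  have hR_meets (m : ℕ) : Meets m (R m) := by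
    induction m with
    | zero =>
      intro u ⟨huT, hu⟩
      refine absurd ?_ h0
      rwa [show u = 0 from support_eq_empty_iff.mp (by simpa [supportedBelow] using hu)] at huT
    | succ m ih => rw [hR_succ]; exact hP m _ ih
  refine ⟨⋃ m, (R m : Set (ι × ℕ)), fun m => (R m).finite_toSet.subset ?_, fun m u hu => ?_⟩
  · rintro p ⟨hp, hpm⟩
    obtain ⟨k, hk⟩ := mem_iUnion.mp hp
    exact hR_mono hpm (hR_level k p hk)
  · exact (hR_meets m u hu).mono
      (inter_subset_inter_right _ (subset_iUnion_of_subset m subset_rfl))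

end

theorem isOpen_iff {U : Set MetricFan} :
    IsOpen U ↔ (none ∈ U → ∃ m : ℕ, ∀ n k : ℕ, m ≤ k → some (n, k) ∈ U) := Iff.rfl

theorem isOpen_singleton_some (p : ℕ × ℕ) : IsOpen ({some p} : Set MetricFan) :=
  isOpen_iff.mpr fun h => nomatch h

def belowLevel (m : ℕ) : Set MetricFan := some '' {p | p.2 < m}

theorem some_notMem_belowLevel {m : ℕ} {p : ℕ × ℕ} (hp : m ≤ p.2) : some p ∉ belowLevel m :=
  fun ⟨_, hq, h⟩ => (Option.some_injective _ h ▸ not_lt.mpr hp) hq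

theorem isClosed_belowLevel (m : ℕ) : IsClosed (belowLevel m) :=
  isOpen_compl_iff.mp <| isOpen_iff.mpr fun _ => ⟨m, fun _ _ hk => some_notMem_belowLevel hk⟩

theorem isDiscrete_belowLevel (m : ℕ) : IsDiscrete (belowLevel m) :=
  isDiscrete_iff_forall_mem_exists_isOpen.mpr fun _ ⟨p, hp, hx⟩ => hx ▸
    ⟨{some p}, isOpen_singleton_some p, inter_eq_left.mpr (singleton_subset_iff.mpr ⟨p, hp, rfl⟩)⟩

theorem finite_inter_belowLevel {K : Set MetricFan} (hK : IsCompact K) (m : ℕ) :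
    (K ∩ belowLevel m).Finite :=
  (hK.inter_right (isClosed_belowLevel m)).finite
    ((isDiscrete_belowLevel m).mono inter_subset_right)

theorem continuous_iff {Y : Type*} [TopologicalSpace Y] [DiscreteTopology Y]
    {f : MetricFan → Y} : Continuous f ↔ ∃ m, ∀ x ∉ belowLevel m, f x = f none := by
  constructor
  · intro hf
    obtain ⟨m, hm⟩ := isOpen_iff.mp ((isOpen_discrete {f none}).preimage hf) rfl
    refine ⟨m, fun x hx => ?_⟩
    rcases x with _ | ⟨n, k⟩
    · rfl
    · exact hm n k (not_lt.mp fun hk => hx ⟨(n, k), hk, rfl⟩)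
  · rintro ⟨m, hm⟩
    refine continuous_def.mpr fun V _ => isOpen_iff.mpr fun hV => ⟨m, fun n k hk => ?_⟩
    show f (some (n, k)) ∈ V
    rw [hm _ (some_notMem_belowLevel hk)]
    exact hV

theorem isCompact_insert_none_image {S : Set (ℕ × ℕ)} (hS : ∀ m, {p ∈ S | p.2 < m}.Finite) :
    IsCompact (insert none (some '' S) : Set MetricFan) := by
  have hS_tendsto : Tendsto (β := MetricFan) (fun p : S => some p.1) cofinite (𝓝 none) := by
    refine tendsto_nhds.mpr fun U hU hnU => ?_
    obtain ⟨m, hm⟩ := isOpen_iff.mp hU hnU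
    refine mem_cofinite.mpr
      (((hS m).preimage Subtype.val_injective.injOn).subset fun p hp => ?_)
    exact ⟨p.2, not_le.mp fun h => hp (hm _ _ h)⟩
  convert hS_tendsto.isCompact_insert_range_of_cofinite using 1
  exact congrArg (insert none) (image_eq_range _ _)

theorem tendsto_nhds_of_eqOn_compl_belowLevel {α Y : Type*} [TopologicalSpace Y]
    {l : Filter α} {f : α → C(MetricFan, Y)} {g : C(MetricFan, Y)} {m : ℕ}
    (hfar : ∀ a, EqOn g (f a) (belowLevel m)ᶜ) (hnear : ∀ x, ∀ᶠ a in l, g x = f a x) :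
    Tendsto f l (𝓝 g) := by
  refine ContinuousMap.tendsto_nhds_of_forall_isCompact_eventually_eqOn fun K hK => ?_
  filter_upwards [(finite_inter_belowLevel hK m).eventually_all.mpr fun x _ => hnear x]
    with a ha x hx
  by_cases hxm : x ∈ belowLevel m
  · exact ha x ⟨hx, hxm⟩
  · exact hfar a hxm

theorem comp_some_mem_supportedBelow_iff {f : MetricFan → Bool} (hf : f none = 0) {m : ℕ} :
    f ∘ some ∈ supportedBelow m ↔ ∀ x ∉ belowLevel m, f x = 0 := by
  constructor
  · intro h x hx
    rcases x with _ | p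
    · exact hf
    · exact notMem_support.mp fun hp => hx ⟨p, h hp, rfl⟩
  · intro h p hp
    by_contra hpm
    exact hp (h _ (some_notMem_belowLevel (not_lt.mp hpm)))

theorem isClosed_image_inter_supportedBelow {B : Set C(MetricFan, Bool)} (hB : IsSeqClosed B)
    (m : ℕ) : IsClosed ((fun f : C(MetricFan, Bool) => ⇑f ∘ some) '' {f ∈ B | f none = 0} ∩
      supportedBelow m) := by
  refine IsSeqClosed.isClosed fun u v hu huv => ?_
  have hv : v ∈ supportedBelow m :=
    (isClosed_supportedBelow m).isSeqClosed (fun i => (hu i).2) huv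
  choose f hf hfu using fun i => (hu i).1
  have hg : ∀ x ∉ belowLevel m, Option.elim x 0 v = 0 :=
    (comp_some_mem_supportedBelow_iff (f := fun x => Option.elim x 0 v) rfl).mp hv
  let g : C(MetricFan, Bool) := ⟨fun x => Option.elim x 0 v, continuous_iff.mpr ⟨m, hg⟩⟩
  have hfg : Tendsto f atTop (𝓝 g) := by
    refine tendsto_nhds_of_eqOn_compl_belowLevel (m := m) (fun i x hx => ?_) fun x => ?_
    · have hfi := (comp_some_mem_supportedBelow_iff (hf i).2).mp (hfu i ▸ (hu i).2)
      exact (hg x hx).trans (hfi x hx).symm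
    · rcases x with _ | p
      · exact Eventually.of_forall fun i => (hf i).2.symm
      · have hp := tendsto_pi_nhds.mp huv p
        rw [nhds_discrete, tendsto_pure] at hp
        filter_upwards [hp] with i hi
        exact hi.symm.trans (congrFun (hfu i) p).symm
  exact ⟨⟨g, ⟨hB (fun i => (hf i).1) hfg, rfl⟩, rfl⟩, hv⟩

theorem zero_notMem_closure_of_isSeqClosed {B : Set C(MetricFan, Bool)} (hB : IsSeqClosed B)
    (h0 : 0 ∉ B) : 0 ∉ closure B := by
  let T := (fun f : C(MetricFan, Bool) => ⇑f ∘ some) '' {f ∈ B | f none = 0}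
  have hT0 : 0 ∉ T := by
    rintro ⟨f, ⟨hfB, hf⟩, hf0⟩
    have hf_zero : f = 0 := by
      ext (_ | p)
      exacts [hf, congrFun hf0 p]
    exact h0 (hf_zero ▸ hfB)
  obtain ⟨R, hR_finite, hR_meets⟩ :=
    exists_finite_below_forall_support_meets (isClosed_image_inter_supportedBelow hB) hT0
  let W := {f : C(MetricFan, Bool) | MapsTo f (insert none (some '' R)) {0}}
  have hW : W ∈ 𝓝 0 :=
    (ContinuousMap.isOpen_setOfPred_mapsTo (isCompact_insert_none_image hR_finite)
      (isOpen_discrete _)).mem_nhds fun _ _ => rfl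
  intro h
  obtain ⟨f, hfW, hfB⟩ := mem_closure_iff_nhds.mp h W hW
  have hf : f none = 0 := hfW (mem_insert _ _)
  obtain ⟨m, hm⟩ := continuous_iff.mp f.continuous
  have hfm : ⇑f ∘ some ∈ supportedBelow m :=
    (comp_some_mem_supportedBelow_iff hf).mpr fun x hx => (hm x hx).trans hf
  obtain ⟨p, hpf, hpR⟩ := hR_meets m _ ⟨⟨f, ⟨hfB, hf⟩, rfl⟩, hfm⟩
  exact hpf (hfW (mem_insert_of_mem _ (mem_image_of_mem _ hpR)))

end MetricFan

/-- The space `C_k(M, 2)` of continuous functions from the metric fan to the discrete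
two-point space, with the compact-open topology, is sequential. -/
theorem metricFan_Ck_two_sequential : SequentialSpace C(MetricFan, Bool) :=
  sequentialSpace_of_zero_notMem_closure fun _ => MetricFan.zero_notMem_closure_of_isSeqClosed
end
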